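/- arXiv:1801.10003 — 7 statements merged into one kernel-verified Lean document; each statement's English description precedes it below -/
import Mathlib

section
/- For all nonnegative integers n, m with n + m even, the identity ∑_{s ∈ E_n ∩ E_m} D_n^{(s)} · D_m^{(s)} = C_{(n+m)/2} holds, where E_n = {n mod 2, n mod 2 + 2, ..., n}, D_n^{(s)} = (2(s+1)/(n+s+2)) · binom(n, (n+s)/2), and C_k is the k-th Catalan number. -/
/-!
For `s ∈ E_n`, `D_n^{(s)}` is the ballot number `binom(n, (n+s)/2) - binom(n, (n+s)/2 + 1)`,
i.e. the `s`-th coordinate of `Aⁿ e₀`, where `A` is the adjacency operator of the half-line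
graph `0 - 1 - 2 - ⋯`. Since `A` is symmetric, `⟨Aⁿ e₀, Aᵐ e₀⟩ = ⟨e₀, Aⁿ⁺ᵐ e₀⟩ = D_{n+m}^{(0)}`,
which is the Catalan number `C_{(n+m)/2}`.
-/

open scoped BigOperators

/-- `D n s = (2(s+1)/(n+s+2)) · binom(n, (n+s)/2)`, the number of `(n,s)`-link patterns. -/
noncomputable def Dlp (n s : ℕ) : ℚ :=
  (2 * (s + 1) : ℚ) / (n + s + 2) * (n.choose ((n + s) / 2))

open Finset

def halfLineAdj {R : Type*} [Add R] (f : ℕ → R) : ℕ → R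
  | 0 => f 1
  | s + 1 => f s + f (s + 2)

theorem sum_range_halfLineAdj_mul {R : Type*} [NonUnitalNonAssocSemiring R] {f g : ℕ → R}
    {N : ℕ} (hf : f (N + 1) = 0) (hg : g (N + 1) = 0) :
    ∑ s ∈ range (N + 1), halfLineAdj f s * g s = ∑ s ∈ range (N + 1), f s * halfLineAdj g s := by
  have down : ∑ s ∈ range N, f (s + 1) * g s
      = f 1 * g 0 + ∑ s ∈ range N, f (s + 2) * g (s + 1) := by
    have := sum_range_succ' (fun s => f (s + 1) * g s) N
    rwa [sum_range_succ, hf, zero_mul, add_zero, add_comm] at this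
  have up : ∑ s ∈ range N, f s * g (s + 1)
      = f 0 * g 1 + ∑ s ∈ range N, f (s + 1) * g (s + 2) := by
    have := sum_range_succ' (fun s => f s * g (s + 1)) N
    rwa [sum_range_succ, hg, mul_zero, add_zero, add_comm] at this
  rw [sum_range_succ', sum_range_succ']
  simp only [halfLineAdj, add_mul, mul_add, sum_add_distrib]
  rw [up, down]
  abel

def ballot (n s : ℕ) : ℚ :=
  if s % 2 = n % 2 then (n.choose ((n + s) / 2) : ℚ) - n.choose ((n + s) / 2 + 1) else 0

theorem ballot_of_mod_two_ne {n s : ℕ} (h : s % 2 ≠ n % 2) : ballot n s = 0 := if_neg h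

theorem ballot_of_lt {n s : ℕ} (h : n < s) : ballot n s = 0 := by
  unfold ballot
  split_ifs
  · rw [Nat.choose_eq_zero_of_lt (by omega), Nat.choose_eq_zero_of_lt (by omega), sub_self]
  · rfl

theorem ballot_zero_left (s : ℕ) : ballot 0 s = if s = 0 then 1 else 0 := by
  rcases s with _ | s
  · simp [ballot]
  · rw [if_neg s.succ_ne_zero, ballot_of_lt s.succ_pos]

theorem ballot_succ_succ (n s : ℕ) : ballot (n + 1) (s + 1) = ballot n s + ballot n (s + 2) := by
  unfold ballot
  by_cases hp : s % 2 = n % 2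
  · rw [if_pos (by omega), if_pos hp, if_pos (by omega),
      show (n + 1 + (s + 1)) / 2 = (n + s) / 2 + 1 by omega,
      show (n + (s + 2)) / 2 = (n + s) / 2 + 1 by omega, Nat.choose_succ_succ, Nat.choose_succ_succ]
    push_cast
    ring
  · rw [if_neg (by omega), if_neg hp, if_neg (by omega), add_zero]

theorem ballot_succ_zero (n : ℕ) : ballot (n + 1) 0 = ballot n 1 := by
  rcases Nat.even_or_odd' n with ⟨k, rfl | rfl⟩
  · rw [ballot_of_mod_two_ne (by omega), ballot_of_mod_two_ne (by omega)]
  · unfold ballot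
    rw [if_pos (by omega), if_pos (by omega), show (2 * k + 1 + 1 + 0) / 2 = k + 1 by omega,
      Nat.choose_succ_succ (2 * k + 1) k, Nat.choose_succ_succ (2 * k + 1) (k + 1),
      ← Nat.choose_symm_half]
    push_cast
    ring

theorem ballot_succ (n : ℕ) : ballot (n + 1) = halfLineAdj (ballot n) := by
  funext s
  rcases s with _ | s
  · exact ballot_succ_zero n
  · exact ballot_succ_succ n s

theorem sum_range_ballot_mul_ballot {N : ℕ} :
    ∀ {n m : ℕ}, n + m ≤ N →
      ∑ s ∈ range (N + 1), ballot n s * ballot m s = ballot (n + m) 0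
  | 0, m, _ => by simp [ballot_zero_left]
  | n + 1, m, h => by
    rw [ballot_succ, sum_range_halfLineAdj_mul (ballot_of_lt (by omega)) (ballot_of_lt (by omega)),
      ← ballot_succ, sum_range_ballot_mul_ballot (by omega), Nat.add_right_comm, add_assoc]

theorem Dlp_eq_ballot {n s : ℕ} (hs : s ≤ n) (hp : s % 2 = n % 2) : Dlp n s = ballot n s := by
  obtain ⟨k, hk⟩ : ∃ k, n + s = 2 * k := ⟨(n + s) / 2, by omega⟩
  have hkn : k ≤ n := by omega
  have hsucc : (n.choose (k + 1) : ℚ) * (k + 1) = n.choose k * (n - k) := by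
    have := congrArg (Nat.cast : ℕ → ℚ) (Nat.choose_succ_right_eq n k)
    push_cast [Nat.cast_sub hkn] at this
    exact this
  have hk' : (n : ℚ) + s = 2 * k := by exact_mod_cast hk
  unfold Dlp ballot
  rw [if_pos hp, hk, Nat.mul_div_cancel_left k two_pos, div_mul_eq_mul_div,
    div_eq_iff (by positivity)]
  linear_combination ((n.choose k : ℚ) + n.choose (k + 1)) * hk' + 2 * hsucc

theorem Dlp_two_mul_zero (j : ℕ) : Dlp (2 * j) 0 = catalan j := by
  have h : ((j : ℚ) + 1) * catalan j = (2 * j).choose j := by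
    exact_mod_cast succ_mul_catalan_eq_centralBinom j
  unfold Dlp
  rw [add_zero, Nat.mul_div_cancel_left j two_pos, ← h]
  field_simp
  push_cast
  ring

theorem ballot_eq_ite (n s : ℕ) :
    ballot n s = if s ≤ n ∧ s % 2 = n % 2 then Dlp n s else 0 := by
  split_ifs with h
  · exact (Dlp_eq_ballot h.1 h.2).symm
  · rcases not_and_or.mp h with h | h
    · exact ballot_of_lt (not_le.mp h)
    · exact ballot_of_mod_two_ne h

/-- For `n + m` even, `∑_{s ∈ E_n ∩ E_m} D_n^{(s)} · D_m^{(s)} = C_{(n+m)/2}`, where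
`E_n = {s : 0 ≤ s ≤ n, s ≡ n (mod 2)}` and `C_k` is the `k`-th Catalan number. -/
theorem stmt2 (n m : ℕ) (h : Even (n + m)) :
    ∑ s ∈ (Finset.range (n + m + 1)).filter
        (fun s => s ≤ n ∧ s ≤ m ∧ s % 2 = n % 2 ∧ s % 2 = m % 2),
      Dlp n s * Dlp m s = catalan ((n + m) / 2) := by
  obtain ⟨j, hj⟩ := h
  rw [sum_filter]
  calc ∑ s ∈ range (n + m + 1),
          (if s ≤ n ∧ s ≤ m ∧ s % 2 = n % 2 ∧ s % 2 = m % 2 then Dlp n s * Dlp m s else 0)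
      = ∑ s ∈ range (n + m + 1), ballot n s * ballot m s :=
        sum_congr rfl fun s _ => by
          rw [ballot_eq_ite, ballot_eq_ite, ite_zero_mul_ite_zero]
          exact if_congr (by tauto) rfl rfl
    _ = ballot (2 * j) 0 := by rw [sum_range_ballot_mul_ballot le_rfl, hj, two_mul]
    _ = catalan ((n + m) / 2) := by
        rw [← Dlp_eq_ballot (Nat.zero_le _) (by omega), Dlp_two_mul_zero, hj, ← two_mul,
          Nat.mul_div_cancel_left j two_pos]
end

section
/- Let q ∈ ℂ^× with q not a root of unity, and let [k] = (q^k − q^{−k})/(q − q^{−1}) and [k]! = ∏_{ℓ=1}^k [ℓ]. Then for all nonnegative integers i, k and all integers j ≥ 0, ∑_{m=0}^{min(i,k)} ((−1)^m/[j+m+1]) · [i+k−m]!/([i−m]!·[k−m]!·[m]!) = ([j]!·[i+j+k+1]!)/([i+j+1]!·[j+k+1]!). -/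
/-!
Induction on the smaller of `i`, `k` (both sides are symmetric in `i` and `k`). The identity
`[a][b] - [a+c][b-c] = [c][a+c-b]` turns the left-hand side `S k` into the recursion
`[j+k+2] S (k+1) = [i+j+k+2] S k + [i] E`; without the term `[i] E` this is the recursion of the
right-hand side, so it remains to see that `E = ∑ₘ (-1)^m [i+k-m]! / ([i-m]! [k+1-m]! [m]!)`
vanishes. Up to the factor
`q^(-mk)`, `[i+k-m]! / [i-m]!` is a polynomial of degree `k` in `q^(2m)`, and alternating sums
against the `q`-binomial coefficients `[k+1, m]` annihilate all such polynomials: the generating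
function `A_K(x) = ∑ₘ (-1)^m [K, m] x^m` satisfies `A_{K+1}(x) = (1 - q^(-K) x) A_K(q x)`, hence
vanishes at `x = q^(2r-K+1)` for `r < K`.
-/

open scoped BigOperators

/-- The quantum integer `[k]_q = (q^k − q^{−k})/(q − q⁻¹)`. -/
noncomputable def qint (q : ℂ) (k : ℤ) : ℂ := (q ^ k - q ^ (-k)) / (q - q⁻¹)

/-- The quantum factorial `[k]! = ∏_{ℓ=1}^k [ℓ]_q`, with `[0]! = 1`. -/
noncomputable def qfact (q : ℂ) (k : ℕ) : ℂ := ∏ l ∈ Finset.range k, qint q (l + 1)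

open Finset Polynomial

section Basic

variable {q : ℂ}

theorem self_sub_inv_ne_zero (hq : q ≠ 0) (hroot : ∀ n : ℕ, 0 < n → q ^ n ≠ 1) :
    q - q⁻¹ ≠ 0 := by
  rw [sub_ne_zero]
  intro h
  exact hroot 2 two_pos (by rw [sq]; nth_rewrite 2 [h]; exact mul_inv_cancel₀ hq)

theorem qint_ne_zero (hq : q ≠ 0) (hroot : ∀ n : ℕ, 0 < n → q ^ n ≠ 1) {n : ℤ}
    (hn : 0 < n) : qint q n ≠ 0 := by
  lift n to ℕ using hn.le
  refine div_ne_zero (sub_ne_zero.mpr fun h => hroot (2 * n) (by omega) ?_)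
    (self_sub_inv_ne_zero hq hroot)
  rw [← zpow_natCast, Nat.cast_mul, Nat.cast_ofNat, two_mul, zpow_add₀ hq]
  nth_rewrite 2 [h]
  rw [← zpow_add₀ hq, add_neg_cancel, zpow_zero]

theorem qfact_zero : qfact q 0 = 1 := prod_range_zero _

theorem qfact_succ (n : ℕ) : qfact q (n + 1) = qfact q n * qint q ((n : ℤ) + 1) :=
  prod_range_succ _ _

theorem qfact_add (n d : ℕ) :
    qfact q (n + d) = qfact q n * ∏ t ∈ range d, qint q ((n : ℤ) + 1 + t) := by
  rw [qfact, prod_range_add]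
  congr 2 with t
  push_cast
  ring_nf

theorem qfact_ne_zero (hq : q ≠ 0) (hroot : ∀ n : ℕ, 0 < n → q ^ n ≠ 1) (n : ℕ) :
    qfact q n ≠ 0 :=
  prod_ne_zero_iff.mpr fun _ _ => qint_ne_zero hq hroot (by positivity)

theorem qint_add (hq : q ≠ 0) (a b : ℤ) :
    qint q (a + b) = q ^ a * qint q b + q ^ (-b) * qint q a := by
  simp only [qint, zpow_neg, zpow_add₀ hq]
  field_simp
  ring

theorem qint_mul_sub_qint_mul (hq : q ≠ 0) (a b c : ℤ) :
    qint q a * qint q b - qint q (a + c) * qint q (b - c) = qint q c * qint q (a + c - b) := by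
  simp only [qint, zpow_neg, zpow_add₀ hq, zpow_sub₀ hq]
  field_simp
  ring

theorem qint_sub (hq : q ≠ 0) (n m : ℤ) :
    qint q (n - m) = q ^ (-m) * ((q ^ n - q ^ (-n) * q ^ (2 * m)) / (q - q⁻¹)) := by
  simp only [qint, zpow_neg, zpow_sub₀ hq, zpow_mul']
  field_simp

end Basic

noncomputable def qbinom (q : ℂ) (K m : ℕ) : ℂ :=
  if m ≤ K then qfact q K / (qfact q m * qfact q (K - m)) else 0

section QBinom

variable {q : ℂ}

theorem qbinom_of_lt {K m : ℕ} (h : K < m) : qbinom q K m = 0 :=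
  if_neg h.not_ge

theorem qbinom_add (m n : ℕ) :
    qbinom q (m + n) m = qfact q (m + n) / (qfact q m * qfact q n) := by
  rw [qbinom, if_pos (Nat.le_add_right m n), Nat.add_sub_cancel_left]

theorem qbinom_zero_right (hq : q ≠ 0) (hroot : ∀ n : ℕ, 0 < n → q ^ n ≠ 1) (K : ℕ) :
    qbinom q K 0 = 1 := by
  rw [qbinom, if_pos K.zero_le, Nat.sub_zero, qfact_zero, one_mul,
    div_self (qfact_ne_zero hq hroot _)]

theorem qbinom_self (hq : q ≠ 0) (hroot : ∀ n : ℕ, 0 < n → q ^ n ≠ 1) (K : ℕ) :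
    qbinom q K K = 1 := by
  rw [qbinom, if_pos le_rfl, Nat.sub_self, qfact_zero, mul_one,
    div_self (qfact_ne_zero hq hroot _)]

theorem qbinom_succ_succ (hq : q ≠ 0) (hroot : ∀ n : ℕ, 0 < n → q ^ n ≠ 1) (K m : ℕ) :
    qbinom q (K + 1) (m + 1) =
      q ^ ((m : ℤ) + 1) * qbinom q K (m + 1) + q ^ ((m : ℤ) - K) * qbinom q K m := by
  rcases lt_trichotomy m K with hmK | rfl | hKm
  · obtain ⟨n, rfl⟩ := Nat.exists_eq_add_of_lt hmK
    rw [show m + n + 1 + 1 = (m + 1) + (n + 1) by ring, show m + n + 1 = m + 1 + n by ring,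
      qbinom_add, qbinom_add, show m + 1 + n = m + (n + 1) by ring, qbinom_add,
      show m + 1 + (n + 1) = m + (n + 1) + 1 by ring, qfact_succ (m + (n + 1)),
      qfact_succ m, qfact_succ n]
    have := qfact_ne_zero hq hroot m
    have := qfact_ne_zero hq hroot n
    have := qfact_ne_zero hq hroot (m + (n + 1))
    have := qint_ne_zero hq hroot (n := (m : ℤ) + 1) (by positivity)
    have := qint_ne_zero hq hroot (n := (n : ℤ) + 1) (by positivity)
    push_cast
    field_simp
    rw [show (m : ℤ) + (n + 1) + 1 = m + 1 + (n + 1) by ring,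
      show (m : ℤ) - (m + (n + 1)) = -(n + 1) by ring, qint_add hq]
    ring
  · rw [qbinom_of_lt (Nat.lt_succ_self m), qbinom_self hq hroot, qbinom_self hq hroot, sub_self,
      zpow_zero]
    ring
  · rw [qbinom_of_lt (by omega), qbinom_of_lt (by omega), qbinom_of_lt hKm]
    ring

end QBinom

section Vanishing

variable {q : ℂ}

theorem sum_alternating_qbinom_succ (hq : q ≠ 0) (hroot : ∀ n : ℕ, 0 < n → q ^ n ≠ 1)
    (K : ℕ) (x : ℂ) :
    ∑ m ∈ range (K + 1 + 1), (-1) ^ m * qbinom q (K + 1) m * x ^ m =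
      (1 - q ^ (-(K : ℤ)) * x) *
        ∑ m ∈ range (K + 1), (-1) ^ m * qbinom q K m * (q * x) ^ m := by
  set g : ℕ → ℂ := fun m => (-1) ^ m * qbinom q K m * (q * x) ^ m
  have hpascal (m : ℕ) : (-1) ^ (m + 1) * qbinom q (K + 1) (m + 1) * x ^ (m + 1) =
      g (m + 1) - q ^ (-(K : ℤ)) * x * g m := by
    simp only [g]
    rw [qbinom_succ_succ hq hroot, mul_pow, mul_pow, ← zpow_natCast q, ← zpow_natCast q,
      zpow_sub₀ hq, zpow_neg]
    push_cast
    field_simp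
    ring
  have hshift : ∑ m ∈ range (K + 1), g (m + 1) = ∑ m ∈ range (K + 1), g m - 1 := by
    have h := sum_range_succ' g (K + 1)
    simp only [g] at h
    rw [sum_range_succ, qbinom_of_lt K.lt_succ_self, qbinom_zero_right hq hroot] at h
    simp only [mul_zero, zero_mul, add_zero, pow_zero, mul_one] at h
    linear_combination -h
  rw [sum_range_succ', sum_congr rfl fun m _ => hpascal m, sum_sub_distrib, ← mul_sum, hshift,
    qbinom_zero_right hq hroot]
  ring

theorem sum_alternating_qbinom_zpow_eq_zero (hq : q ≠ 0)
    (hroot : ∀ n : ℕ, 0 < n → q ^ n ≠ 1) {K r : ℕ} (hr : r < K) :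
    ∑ m ∈ range (K + 1), (-1) ^ m * qbinom q K m * (q ^ (2 * (r : ℤ) - K + 1)) ^ m = 0 := by
  induction K generalizing r with
  | zero => exact absurd hr r.not_lt_zero
  | succ K ih =>
    rw [sum_alternating_qbinom_succ hq hroot]
    rcases Nat.lt_succ_iff_lt_or_eq.mp hr with hr | rfl
    · refine mul_eq_zero_of_right _ ?_
      have hx : q * q ^ (2 * (r : ℤ) - (K + 1 : ℕ) + 1) = q ^ (2 * (r : ℤ) - K + 1) := by
        rw [← zpow_one_add₀ hq]
        push_cast
        ring_nf
      rw [hx, ih hr]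
    · refine mul_eq_zero_of_left ?_ _
      rw [← zpow_add₀ hq]
      push_cast
      ring_nf
      simp

theorem sum_alternating_qbinom_eval_eq_zero (hq : q ≠ 0)
    (hroot : ∀ n : ℕ, 0 < n → q ^ n ≠ 1) {d : ℕ} {P : ℂ[X]} (hP : P.natDegree ≤ d) :
    ∑ m ∈ range (d + 1 + 1),
      (-1) ^ m * qbinom q (d + 1) m * (q ^ (-((m : ℤ) * d)) * P.eval (q ^ (2 * (m : ℤ)))) =
        0 := by
  have hmono (m r : ℕ) : q ^ (-((m : ℤ) * d)) * (q ^ (2 * (m : ℤ))) ^ r =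
      (q ^ (2 * (r : ℤ) - (d + 1 : ℕ) + 1)) ^ m := by
    rw [← zpow_natCast, ← zpow_natCast, ← zpow_mul, ← zpow_mul, ← zpow_add₀ hq]
    push_cast
    ring_nf
  calc _ = ∑ m ∈ range (d + 1 + 1), ∑ r ∈ range (d + 1), P.coeff r *
        ((-1) ^ m * qbinom q (d + 1) m * (q ^ (2 * (r : ℤ) - (d + 1 : ℕ) + 1)) ^ m) := by
        refine sum_congr rfl fun m _ => ?_
        rw [eval_eq_sum_range' (Nat.lt_succ_of_le hP), mul_sum, mul_sum]
        refine sum_congr rfl fun r _ => ?_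
        rw [← hmono]
        ring
    _ = ∑ r ∈ range (d + 1), P.coeff r * ∑ m ∈ range (d + 1 + 1),
        (-1) ^ m * qbinom q (d + 1) m * (q ^ (2 * (r : ℤ) - (d + 1 : ℕ) + 1)) ^ m := by
        rw [sum_comm]
        simp_rw [mul_sum]
    _ = 0 := sum_eq_zero fun r hr => by
        rw [sum_alternating_qbinom_zpow_eq_zero hq hroot (mem_range.mp hr), mul_zero]

theorem sum_alternating_qfact_div_eq_zero (hq : q ≠ 0)
    (hroot : ∀ n : ℕ, 0 < n → q ^ n ≠ 1) {i d : ℕ} (hdi : d + 1 ≤ i) :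
    ∑ m ∈ range (d + 1 + 1),
      (-1) ^ m * (qfact q (i + d - m) / (qfact q (i - m) * qfact q (d + 1 - m) * qfact q m)) =
        0 := by
  -- `[i - m + 1 + t] = q^(-m) (a_t - b_t q^(2m))` by `qint_sub`; `P` collects the linear factors.
  set P : ℂ[X] := ∏ t ∈ range d, (C (-q ^ (-((i : ℤ) + 1 + t)) / (q - q⁻¹)) * X +
    C (q ^ ((i : ℤ) + 1 + t) / (q - q⁻¹)))
  have hP : P.natDegree ≤ d := by
    refine (natDegree_prod_le _ _).trans ?_
    calc _ ≤ ∑ _t ∈ range d, 1 := sum_le_sum fun _ _ => natDegree_linear_le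
      _ = d := by simp
  have hprod {m : ℕ} (hm : m ≤ i) : ∏ t ∈ range d, qint q ((i - m : ℕ) + 1 + t) =
      q ^ (-((m : ℤ) * d)) * P.eval (q ^ (2 * (m : ℤ))) := by
    rw [eval_prod, ← neg_mul, zpow_mul, zpow_natCast, pow_eq_prod_const, ← prod_mul_distrib]
    refine prod_congr rfl fun t _ => ?_
    rw [show ((i - m : ℕ) : ℤ) + 1 + t = (i + 1 + t) - m by omega, qint_sub hq]
    simp only [eval_add, eval_mul, eval_C, eval_X]
    ring
  have hterm {m : ℕ} (hm : m ∈ range (d + 1 + 1)) :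
      (-1) ^ m * (qfact q (i + d - m) / (qfact q (i - m) * qfact q (d + 1 - m) * qfact q m)) =
        (qfact q (d + 1))⁻¹ * ((-1) ^ m * qbinom q (d + 1) m *
          (q ^ (-((m : ℤ) * d)) * P.eval (q ^ (2 * (m : ℤ))))) := by
    have hm := Nat.lt_succ_iff.mp (mem_range.mp hm)
    rw [show i + d - m = i - m + d by omega, qfact_add, hprod (by omega), qbinom, if_pos hm]
    have := qfact_ne_zero hq hroot (i - m)
    have := qfact_ne_zero hq hroot (d + 1 - m)
    have := qfact_ne_zero hq hroot m
    have := qfact_ne_zero hq hroot (d + 1)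
    field_simp
  rw [sum_congr rfl fun m hm => hterm hm, ← mul_sum,
    sum_alternating_qbinom_eval_eq_zero hq hroot hP, mul_zero]

end Vanishing

/-- The `q`-multinomial coefficient of `(a - m, b - m, m)`; with truncated subtraction it is only
meaningful for `m ≤ min a b`. -/
noncomputable def qtrinomial (q : ℂ) (a b m : ℕ) : ℂ :=
  qfact q (a + b - m) / (qfact q (a - m) * qfact q (b - m) * qfact q m)

theorem qtrinomial_comm (q : ℂ) (a b m : ℕ) : qtrinomial q a b m = qtrinomial q b a m := by
  rw [qtrinomial, qtrinomial, add_comm a]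
  ring

section Main

variable {q : ℂ}

theorem qint_mul_summand_succ (hq : q ≠ 0) (hroot : ∀ n : ℕ, 0 < n → q ^ n ≠ 1)
    {i j k m : ℕ} (hmk : m ≤ k) :
    qint q ((j : ℤ) + k + 2) *
        ((-1) ^ m / qint q ((j : ℤ) + m + 1) * qtrinomial q i (k + 1) m) =
      qint q ((i : ℤ) + j + k + 2) *
        ((-1) ^ m / qint q ((j : ℤ) + m + 1) * qtrinomial q i k m) +
      qint q i * ((-1) ^ m *
        (qfact q (i + k - m) / (qfact q (i - m) * qfact q (k + 1 - m) * qfact q m))) := by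
  have key := qint_mul_sub_qint_mul hq ((j : ℤ) + k + 2) (((i + k - m : ℕ) : ℤ) + 1) i
  rw [show (j : ℤ) + k + 2 + i = i + j + k + 2 by ring,
    show ((i + k - m : ℕ) : ℤ) + 1 - i = ((k - m : ℕ) : ℤ) + 1 by omega,
    show (i : ℤ) + j + k + 2 - (((i + k - m : ℕ) : ℤ) + 1) = j + m + 1 by omega] at key
  rw [qtrinomial, qtrinomial, show i + (k + 1) - m = i + k - m + 1 by omega,
    show k + 1 - m = k - m + 1 by omega, qfact_succ, qfact_succ]
  have := qint_ne_zero hq hroot (n := (j : ℤ) + m + 1) (by positivity)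
  have := qint_ne_zero hq hroot (n := ((k - m : ℕ) : ℤ) + 1) (by positivity)
  have := qfact_ne_zero hq hroot (i - m)
  have := qfact_ne_zero hq hroot (k - m)
  have := qfact_ne_zero hq hroot m
  field_simp
  linear_combination qfact q (i + k - m) * key

theorem qint_mul_sum_succ (hq : q ≠ 0) (hroot : ∀ n : ℕ, 0 < n → q ^ n ≠ 1)
    {i k : ℕ} (j : ℕ) (hki : k + 1 ≤ i) :
    qint q ((j : ℤ) + k + 2) * ∑ m ∈ range (k + 1 + 1),
        (-1) ^ m / qint q ((j : ℤ) + m + 1) * qtrinomial q i (k + 1) m =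
      qint q ((i : ℤ) + j + k + 2) * ∑ m ∈ range (k + 1),
        (-1) ^ m / qint q ((j : ℤ) + m + 1) * qtrinomial q i k m := by
  have hcorr := sum_alternating_qfact_div_eq_zero hq hroot hki
  rw [sum_range_succ] at hcorr
  have hlast : qint q ((j : ℤ) + k + 2) *
      ((-1) ^ (k + 1) / qint q ((j : ℤ) + (k + 1 : ℕ) + 1) * qtrinomial q i (k + 1) (k + 1)) =
      qint q i * ((-1) ^ (k + 1) * (qfact q (i + k - (k + 1)) /
        (qfact q (i - (k + 1)) * qfact q (k + 1 - (k + 1)) * qfact q (k + 1)))) := by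
    have hi : qfact q i = qfact q (i - 1) * qint q i := by
      have h := qfact_succ (q := q) (i - 1)
      rwa [Nat.sub_add_cancel (by omega : 1 ≤ i), show ((i - 1 : ℕ) : ℤ) + 1 = i by omega]
        at h
    rw [qtrinomial, show i + (k + 1) - (k + 1) = i by omega,
      show i + k - (k + 1) = i - 1 by omega, Nat.sub_self, hi, qfact_zero,
      show (j : ℤ) + (k + 1 : ℕ) + 1 = j + k + 2 by push_cast; ring]
    have := qint_ne_zero hq hroot (n := (j : ℤ) + k + 2) (by positivity)
    field_simp
  rw [sum_range_succ, mul_add, mul_sum,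
    sum_congr rfl fun m hm =>
      qint_mul_summand_succ hq hroot (Nat.lt_succ_iff.mp (mem_range.mp hm)),
    sum_add_distrib, ← mul_sum, ← mul_sum]
  linear_combination qint q i * hcorr + hlast

theorem sum_qtrinomial_of_le (hq : q ≠ 0) (hroot : ∀ n : ℕ, 0 < n → q ^ n ≠ 1)
    {i k : ℕ} (j : ℕ) (hki : k ≤ i) :
    ∑ m ∈ range (k + 1), (-1) ^ m / qint q ((j : ℤ) + m + 1) * qtrinomial q i k m =
      qfact q j * qfact q (i + j + k + 1) / (qfact q (i + j + 1) * qfact q (j + k + 1)) := by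
  induction k with
  | zero =>
    rw [sum_range_one, qtrinomial, qfact_succ j]
    have := qint_ne_zero hq hroot (n := (j : ℤ) + 1) (by positivity)
    have := qfact_ne_zero hq hroot i
    have := qfact_ne_zero hq hroot j
    have := qfact_ne_zero hq hroot (i + j + 1)
    simp only [Nat.sub_zero, add_zero, Nat.cast_zero, pow_zero, qfact_zero]
    field_simp
  | succ k ih =>
    have hjk := qint_ne_zero hq hroot (n := (j : ℤ) + k + 2) (by positivity)
    refine mul_left_cancel₀ hjk ?_
    rw [qint_mul_sum_succ hq hroot j hki, ih (by omega),
      show i + j + (k + 1) + 1 = i + j + k + 1 + 1 by ring,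
      show j + (k + 1) + 1 = j + k + 1 + 1 by ring,
      qfact_succ (i + j + k + 1), qfact_succ (j + k + 1),
      show ((i + j + k + 1 : ℕ) : ℤ) + 1 = i + j + k + 2 by push_cast; ring,
      show ((j + k + 1 : ℕ) : ℤ) + 1 = j + k + 2 by push_cast; ring]
    have := qint_ne_zero hq hroot (n := (i : ℤ) + j + k + 2) (by positivity)
    have := qfact_ne_zero hq hroot (i + j + 1)
    have := qfact_ne_zero hq hroot (j + k + 1)
    field_simp

end Main

/-- For `q` not a root of unity and nonnegative integers `i, k, j`:
`∑_{m=0}^{min(i,k)} ((−1)^m/[j+m+1]) · [i+k−m]!/([i−m]!·[k−m]!·[m]!)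
  = ([j]!·[i+j+k+1]!)/([i+j+1]!·[j+k+1]!)`. -/
theorem stmt5 (q : ℂ) (hq : q ≠ 0) (hroot : ∀ n : ℕ, 0 < n → q ^ n ≠ 1)
    (i k j : ℕ) :
    ∑ m ∈ Finset.range (min i k + 1),
        ((-1 : ℂ) ^ m / qint q ((j : ℤ) + m + 1)) *
          (qfact q (i + k - m) / (qfact q (i - m) * qfact q (k - m) * qfact q m)) =
      qfact q j * qfact q (i + j + k + 1) / (qfact q (i + j + 1) * qfact q (j + k + 1)) := by
  rcases le_total k i with hki | hik
  · rw [min_eq_right hki]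
    exact sum_qtrinomial_of_le hq hroot j hki
  · rw [min_eq_left hik]
    calc _ = ∑ m ∈ range (i + 1), (-1) ^ m / qint q ((j : ℤ) + m + 1) * qtrinomial q k i m :=
          sum_congr rfl fun m _ => congrArg _ (qtrinomial_comm q i k m)
      _ = _ := sum_qtrinomial_of_le hq hroot j hik
      _ = _ := by
          rw [show k + j + i = i + j + k by ring, add_comm j i, add_comm k j]
          ring
end

section
/- Let ς = (s_1, ..., s_d) be a multiindex of nonnegative integers and define s_min recursively by s_min((s_1)) = s_1 and s_min((s_1,...,s_{i+1})) = s_min((s_1,...,s_i)) − s_{i+1} if s_{i+1} ≤ s_min((s_1,...,s_i)); = (s_min((s_1,...,s_i)) − s_{i+1}) mod 2 if s_min((s_1,...,s_i)) < s_{i+1} < s_1+...+s_i; = s_{i+1} − (s_1+...+s_i) if s_1+...+s_i ≤ s_{i+1}. Then the set E_ς = ∪_{r ∈ E_{(s_1,...,s_{d-1})}} E_{(r, s_d)} (with E_{(s)} = {s}) equals {s_min(ς), s_min(ς)+2, ..., s_1+...+s_d}. -/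
/-- The admissibility set `E_{(r,t)} = {s : |r−t| ≤ s ≤ r+t, s ≡ r+t (mod 2)}`. -/
def Epair (r t : ℕ) : Set ℕ :=
  {s | ((r : ℤ) - t).natAbs ≤ s ∧ s ≤ r + t ∧ s % 2 = (r + t) % 2}

/-- `EmultiRev l` is the set `E_ς` for the multiindex `ς` given by the *reverse* of `l`:
`E_{()} = {0}` (so that `E_{(s)} = E_{(0,s)} = {s}`), and
`E_{ς̂ ⊕ (t)} = ∪_{r ∈ E_{ς̂}} E_{(r,t)}`. -/
def EmultiRev : List ℕ → Set ℕ
  | [] => {0}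
  | t :: l => {s | ∃ r ∈ EmultiRev l, s ∈ Epair r t}

/-- One step of the recursion for `s_min`: from `m = s_min(ς_i)`, `M = s_1 + ⋯ + s_i`, and the
next entry `t = s_{i+1}`, produce `s_min(ς_{i+1})`. -/
def sminStep (m M t : ℕ) : ℕ :=
  if t ≤ m then m - t
  else if t < M then (((m : ℤ) - t) % 2).toNat
  else t - M

/-- `s_min(ς)` computed by the recursion of the statement, processing the entries of `ς`
from left to right while accumulating the running sum. -/
def smin (l : List ℕ) : ℕ :=
  (l.foldl (fun p t => (sminStep p.1 p.2 t, p.2 + t)) ((0, 0) : ℕ × ℕ)).1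

/-!
Induct on the last entry `t`. If `E_ς̂` is the progression `m, m+2, …, M` with `m ≡ M (mod 2)`,
then `⋃_{r} E_{(r,t)}` is again a step-2 progression: its top is `M + t`, and its bottom is
`min_r |r − t|` over the progression, which is `m − t`, `t − M`, or the parity of `m − t`
according as `t` lies below, above, or strictly inside `[m, M]`; this is `sminStep m M t`.
-/

def stepTwoIcc (m M : ℕ) : Set ℕ :=
  {s | m ≤ s ∧ s ≤ M ∧ s % 2 = m % 2}

lemma foldl_sminStep_snd (l : List ℕ) (p : ℕ × ℕ) :
    (l.foldl (fun p t => (sminStep p.1 p.2 t, p.2 + t)) p).2 = p.2 + l.sum := by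
  induction l generalizing p with
  | nil => simp
  | cons a l ih => simp only [List.foldl_cons, ih, List.sum_cons]; ring

lemma smin_append_singleton (l : List ℕ) (t : ℕ) :
    smin (l ++ [t]) = sminStep (smin l) l.sum t := by
  have hsum := foldl_sminStep_snd l (0, 0)
  rw [zero_add] at hsum
  simp only [smin, List.foldl_append, List.foldl_cons, List.foldl_nil, hsum]

section Step

variable {m M : ℕ}

lemma sminStep_le_add (hmM : m ≤ M) (t : ℕ) : sminStep m M t ≤ M + t := by
  unfold sminStep
  split_ifs <;> omega

lemma sminStep_mod_two (hpar : m % 2 = M % 2) (t : ℕ) :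
    sminStep m M t % 2 = (M + t) % 2 := by
  unfold sminStep
  split_ifs <;> omega

lemma biUnion_Epair_stepTwoIcc (hmM : m ≤ M) (hpar : m % 2 = M % 2) (t : ℕ) :
    {s | ∃ r ∈ stepTwoIcc m M, s ∈ Epair r t} = stepTwoIcc (sminStep m M t) (M + t) := by
  ext s
  simp only [stepTwoIcc, Epair, Set.mem_ofPred_eq]
  unfold sminStep
  constructor
  · rintro ⟨r, hr, hs⟩
    split_ifs <;> omega
  · intro hs
    -- the least `r ≥ m` with `|r − t| ≤ s`; it has the right parity since `s ≡ m + t`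
    refine ⟨max m (max (s - t) (t - s)), ?_, ?_⟩ <;> split_ifs at hs <;> omega

end Step

lemma EmultiRev_reverse_eq_stepTwoIcc (l : List ℕ) :
    EmultiRev l.reverse = stepTwoIcc (smin l) l.sum ∧
      smin l ≤ l.sum ∧ smin l % 2 = l.sum % 2 := by
  induction l using List.reverseRec with
  | nil =>
    refine ⟨?_, le_rfl, rfl⟩
    ext s
    simp only [EmultiRev, stepTwoIcc, smin, List.reverse_nil, List.foldl_nil, List.sum_nil,
      Set.mem_singleton_iff, Set.mem_ofPred_eq]
    omega
  | append_singleton l t ih =>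
    obtain ⟨hE, hle, hpar⟩ := ih
    rw [smin_append_singleton, List.sum_append, List.sum_singleton]
    refine ⟨?_, sminStep_le_add hle t, sminStep_mod_two hpar t⟩
    rw [List.reverse_concat', ← biUnion_Epair_stepTwoIcc hle hpar, ← hE]
    rfl

theorem stmt9_general (l : List ℕ) :
    EmultiRev l.reverse = {s | smin l ≤ s ∧ s ≤ l.sum ∧ s % 2 = smin l % 2} :=
  (EmultiRev_reverse_eq_stepTwoIcc l).1

/-- The recursively defined set `E_ς` equals `{s_min(ς), s_min(ς)+2, …, s_1+⋯+s_d}`. -/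
theorem stmt9 (l : List ℕ) (hl : l ≠ []) :
    EmultiRev l.reverse = {s | smin l ≤ s ∧ s ≤ l.sum ∧ s % 2 = smin l % 2} :=
  stmt9_general l
end

section
/- Let n ≥ 1 and let s ∈ E_n = {s : 0 ≤ s ≤ n, s ≡ n (mod 2)}. Fix integers Δ_k for k ≥ 0 (e.g. Δ_k = k·p − 1 for a fixed integer p ≥ 2, Δ_0 = −1 when convenient) and write s = Δ_{k_s} + R_s with 0 ≤ R_s ≤ p−1. Define Ḋ_n^{(s)} as the number of nonnegative-integer walks (r_1,...,r_n) with r_0 = 0, |r_{i+1} − r_i| = 1, r_n = s, such that when followed backward from step n, the walk reaches height Δ_{k_s+1} before reaching height Δ_{k_s}. Then Ḋ_n^{(s)} satisfies: Ḋ_n^{(s)} = 0 if R_s = 0; Ḋ_n^{(s)} = Ḋ_{n-1}^{(s-1)} + D_{n-1}^{(s+1)} if R_s = p − 1; and Ḋ_n^{(s)} = Ḋ_{n-1}^{(s-1)} + Ḋ_{n-1}^{(s+1)} if 1 ≤ R_s ≤ p−2; with Ḋ_1^{(1)} = 0 and the convention Ḋ_{n-1}^{(-1)} = 0, where D_n^{(s)}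 is the total number of such walks ending at s. -/
/-!
Split a walk ending at `s` by its last step: it is a walk ending at `s - 1` or `s + 1`
followed by one step up or down. Read backwards, the condition "reach the ceiling
`Δ_{k_s+1}` before the floor `Δ_{k_s}`" does not see an appended final height that lies
strictly between the two, so it passes to the shortened walk, whose own floor and ceiling are
those of `s` unless `s + 1` is the ceiling (`R_s = p - 1`), where it holds for every walk.
If `R_s = 0`, the walk ends on the floor and can never qualify.
-/

/-- ±1-step walks `(r_0, r_1, …, r_n)` from `r_0 = 0`, staying nonnegative, ending at
`r_n = s`. -/
def WalkSet (n : ℕ) (s : ℤ) : Set (Fin (n + 1) → ℤ) :=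
  {r | r 0 = 0 ∧ (∀ i, 0 ≤ r i) ∧
    (∀ i : Fin n, r i.succ - r i.castSucc = 1 ∨ r i.succ - r i.castSucc = -1) ∧
    r (Fin.last n) = s}

/-- With `Δ_k = kp − 1` and `k_s = (s+1)/p` (so `s = Δ_{k_s} + R_s`, `R_s = (s+1) % p`):
the walk, followed backward from step `n`, reaches height `Δ_{k_s+1}` before reaching
height `Δ_{k_s}`. -/
def IsRadicalWalk (p n : ℕ) (s : ℤ) (r : Fin (n + 1) → ℤ) : Prop :=
  ∃ i : Fin (n + 1), r i = ((s + 1) / (p : ℤ) + 1) * p - 1 ∧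
    ∀ j : Fin (n + 1), i ≤ j → r j ≠ ((s + 1) / (p : ℤ)) * p - 1

/-- `D_n^{(s)}`: the total number of such walks ending at `s`. -/
noncomputable def Dtot (n : ℕ) (s : ℤ) : ℕ := Nat.card (WalkSet n s)

/-- `Ḋ_n^{(s)}`: the number of such walks ending at `s` which, followed backward,
reach height `Δ_{k_s+1}` before height `Δ_{k_s}`. -/
noncomputable def Drad (p n : ℕ) (s : ℤ) : ℕ :=
  Nat.card {r : Fin (n + 1) → ℤ // r ∈ WalkSet n s ∧ IsRadicalWalk p n s r}

open Set

-- Read from the end backwards, `r` reaches `C` before `F`.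
def HitsBefore {m : ℕ} (C F : ℤ) (r : Fin m → ℤ) : Prop :=
  ∃ i, r i = C ∧ ∀ j, i ≤ j → r j ≠ F

section HitsBefore

variable {m : ℕ} {C F : ℤ}

theorem hitsBefore_snoc_iff {r : Fin m → ℤ} {x : ℤ} (hxC : x ≠ C) (hxF : x ≠ F) :
    HitsBefore C F (Fin.snoc r x : Fin (m + 1) → ℤ) ↔ HitsBefore C F r := by
  constructor
  · rintro ⟨i, hi, hij⟩
    induction i using Fin.lastCases with
    | last => simp only [Fin.snoc_last] at hi; exact absurd hi hxC
    | cast i =>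
      refine ⟨i, by simpa using hi, fun j hj => ?_⟩
      simpa using hij j.castSucc (Fin.castSucc_le_castSucc_iff.2 hj)
  · rintro ⟨i, hi, hij⟩
    refine ⟨i.castSucc, by simpa using hi, fun j => ?_⟩
    induction j using Fin.lastCases with
    | last => simpa using fun _ => hxF
    | cast j => simpa using hij j ∘ Fin.castSucc_le_castSucc_iff.1

theorem hitsBefore_of_last_eq {r : Fin (m + 1) → ℤ} (h : r (Fin.last m) = C) (hCF : C ≠ F) :
    HitsBefore C F r :=
  ⟨Fin.last m, h, fun j hj => by rw [Fin.last_le_iff.1 hj, h]; exact hCF⟩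

theorem not_hitsBefore_of_last_eq {r : Fin (m + 1) → ℤ} (h : r (Fin.last m) = F) :
    ¬ HitsBefore C F r :=
  fun ⟨i, _, hi⟩ => hi _ (Fin.le_last i) h

end HitsBefore

section WalkSet

variable {n : ℕ} {s t : ℤ}

theorem le_of_mem_walkSet {r : Fin (n + 1) → ℤ} (hr : r ∈ WalkSet n s) (i : Fin (n + 1)) :
    r i ≤ i := by
  obtain ⟨h0, -, hstep, -⟩ := hr
  induction i using Fin.induction with
  | zero => simp [h0]
  | succ i ih =>
    have := hstep i
    simp only [Fin.val_succ, Fin.val_castSucc] at ih ⊢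
    omega

theorem walkSet_finite (n : ℕ) (s : ℤ) : (WalkSet n s).Finite :=
  (Finite.pi fun _ => finite_Icc 0 (n : ℤ)).subset fun r hr i _ =>
    ⟨hr.2.1 i, (le_of_mem_walkSet hr i).trans (by exact_mod_cast i.is_le)⟩

theorem walkSet_disjoint (h : s ≠ t) : Disjoint (WalkSet n s) (WalkSet n t) :=
  disjoint_left.2 fun _ hs ht => h (hs.2.2.2.symm.trans ht.2.2.2)

theorem snoc_mem_walkSet {r : Fin (n + 1) → ℤ} (hr : r ∈ WalkSet n t) (hs : 0 ≤ s)
    (hst : s - t = 1 ∨ s - t = -1) : (Fin.snoc r s : Fin (n + 2) → ℤ) ∈ WalkSet (n + 1) s := by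
  obtain ⟨h0, hpos, hstep, hlast⟩ := hr
  refine ⟨by rw [← Fin.castSucc_zero, Fin.snoc_castSucc, h0], fun i => ?_, fun i => ?_,
    Fin.snoc_last _ _⟩
  · induction i using Fin.lastCases with
    | last => simpa using hs
    | cast j => simpa using hpos j
  · induction i using Fin.lastCases with
    | last => simpa [hlast] using hst
    | cast j => rw [Fin.succ_castSucc, Fin.snoc_castSucc, Fin.snoc_castSucc]; exact hstep j

theorem init_mem_walkSet {r : Fin (n + 2) → ℤ} (hr : r ∈ WalkSet (n + 1) s) :
    Fin.init r ∈ WalkSet n (r (Fin.last n).castSucc) := by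
  obtain ⟨h0, hpos, hstep, -⟩ := hr
  exact ⟨h0, fun i => hpos _, fun i => by simpa [Fin.init] using hstep i.castSucc, rfl⟩

theorem walkSet_succ (hs : 0 ≤ s) :
    WalkSet (n + 1) s = (Fin.snoc · s) '' WalkSet n (s - 1) ∪ (Fin.snoc · s) '' WalkSet n (s + 1) := by
  ext r
  constructor
  · intro hr
    have hrs : Fin.snoc (Fin.init r) s = r := by rw [← hr.2.2.2, Fin.snoc_init_self]
    have hstep := hr.2.2.1 (Fin.last n)
    rw [Fin.succ_last, hr.2.2.2] at hstep
    rcases hstep with h | h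
    · exact .inl ⟨_, by simpa [show r (Fin.last n).castSucc = s - 1 by omega] using
        init_mem_walkSet hr, hrs⟩
    · exact .inr ⟨_, by simpa [show r (Fin.last n).castSucc = s + 1 by omega] using
        init_mem_walkSet hr, hrs⟩
  · rintro (⟨q, hq, rfl⟩ | ⟨q, hq, rfl⟩)
    · exact snoc_mem_walkSet hq hs (.inl (by ring))
    · exact snoc_mem_walkSet hq hs (.inr (by ring))

theorem ncard_walkSet_succ_inter (hs : 0 ≤ s) (Q : Set (Fin (n + 2) → ℤ)) :
    (WalkSet (n + 1) s ∩ Q).ncard =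
      (WalkSet n (s - 1) ∩ (Fin.snoc · s) ⁻¹' Q).ncard +
        (WalkSet n (s + 1) ∩ (Fin.snoc · s) ⁻¹' Q).ncard := by
  have hinj := Fin.snoc_left_injective (n := n + 1) (α := fun _ => ℤ) s
  have hdisj : Disjoint (WalkSet n (s - 1) ∩ (Fin.snoc · s) ⁻¹' Q)
      (WalkSet n (s + 1) ∩ (Fin.snoc · s) ⁻¹' Q) :=
    (walkSet_disjoint (by omega)).mono inter_subset_left inter_subset_left
  rw [walkSet_succ hs, union_inter_distrib_right, ← image_inter_preimage, ← image_inter_preimage,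
    ncard_union_eq ((disjoint_image_iff hinj).2 hdisj)
      (((walkSet_finite _ _).inter_of_left _).image _)
      (((walkSet_finite _ _).inter_of_left _).image _),
    ncard_image_of_injective _ hinj, ncard_image_of_injective _ hinj]

end WalkSet

-- The paper's `Δ_k` and `k_s`.
def criticalHeight (p : ℕ) (k : ℤ) : ℤ := k * p - 1

def levelIndex (p : ℕ) (s : ℤ) : ℤ := (s + 1) / p

section Levels

variable {p : ℕ} {s : ℤ}

theorem isRadicalWalk_iff {n : ℕ} {r : Fin (n + 1) → ℤ} :
    IsRadicalWalk p n s r ↔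
      HitsBefore (criticalHeight p (levelIndex p s + 1)) (criticalHeight p (levelIndex p s)) r :=
  Iff.rfl

theorem criticalHeight_levelIndex :
    criticalHeight p (levelIndex p s) = s - (s + 1) % p := by
  have := Int.mul_ediv_add_emod (s + 1) p
  unfold criticalHeight levelIndex
  linarith

theorem criticalHeight_add_one (k : ℤ) :
    criticalHeight p (k + 1) = criticalHeight p k + p := by
  unfold criticalHeight
  ring

theorem add_ediv_eq_ediv {a c d : ℤ} (hd : 0 < d) (h0 : 0 ≤ a % d + c) (h1 : a % d + c < d) :
    (a + c) / d = a / d :=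
  ((Int.ediv_emod_unique hd).2 ⟨by linarith [Int.mul_ediv_add_emod a d], h0, h1⟩).1

theorem levelIndex_sub_one (hp : 0 < p) (h : (s + 1) % p ≠ 0) :
    levelIndex p (s - 1) = levelIndex p s := by
  have := Int.emod_nonneg (s + 1) (by omega : (p : ℤ) ≠ 0)
  have := Int.emod_lt_of_pos (s + 1) (by omega : (0 : ℤ) < p)
  unfold levelIndex
  rw [show s - 1 + 1 = s + 1 + -1 by ring]
  exact add_ediv_eq_ediv (by omega) (by omega) (by omega)

theorem levelIndex_add_one (hp : 0 < p) (h : (s + 1) % p + 1 < p) :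
    levelIndex p (s + 1) = levelIndex p s :=
  have := Int.emod_nonneg (s + 1) (by omega : (p : ℤ) ≠ 0)
  add_ediv_eq_ediv (by omega) (by omega) h

end Levels

theorem drad_eq_ncard (p n : ℕ) (s : ℤ) :
    Drad p n s = (WalkSet n s ∩ {r | IsRadicalWalk p n s r}).ncard :=
  rfl

section Drad

variable {p m : ℕ} {s : ℤ}

theorem drad_eq_zero_of_emod_eq_zero (h : (s + 1) % p = 0) : Drad p m s = 0 := by
  have : WalkSet m s ∩ {r | IsRadicalWalk p m s r} = ∅ :=
    eq_empty_of_forall_notMem fun r ⟨hr, hrad⟩ => not_hitsBefore_of_last_eq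
      (by rw [hr.2.2.2, criticalHeight_levelIndex, h, sub_zero]) (isRadicalWalk_iff.1 hrad)
  rw [drad_eq_ncard, this, ncard_empty]

theorem drad_eq_zero_of_le (hp : 0 < p) (h : (m : ℤ) ≤ s) : Drad p m s = 0 := by
  have : WalkSet m s ∩ {r | IsRadicalWalk p m s r} = ∅ := by
    refine eq_empty_of_forall_notMem ?_
    rintro r ⟨hr, i, hi, -⟩
    change r i = criticalHeight p (levelIndex p s + 1) at hi
    have := le_of_mem_walkSet hr i
    have := Int.emod_lt_of_pos (s + 1) (by omega : (0 : ℤ) < p)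
    have : (i : ℤ) ≤ m := by exact_mod_cast i.is_le
    rw [criticalHeight_add_one, criticalHeight_levelIndex] at hi
    omega
  rw [drad_eq_ncard, this, ncard_empty]

theorem drad_succ_of_emod_ne_zero (hp : 0 < p) (hs : 0 ≤ s) (h : (s + 1) % p ≠ 0) :
    Drad p (m + 1) s = Drad p m (s - 1) +
      (WalkSet m (s + 1) ∩ {r | HitsBefore (criticalHeight p (levelIndex p s + 1))
        (criticalHeight p (levelIndex p s)) r}).ncard := by
  have := Int.emod_nonneg (s + 1) (by omega : (p : ℤ) ≠ 0)
  have := Int.emod_lt_of_pos (s + 1) (by omega : (0 : ℤ) < p)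
  have hsnoc (r : Fin (m + 1) → ℤ) :
      HitsBefore (criticalHeight p (levelIndex p s + 1)) (criticalHeight p (levelIndex p s))
        (Fin.snoc r s : Fin (m + 2) → ℤ) ↔
      HitsBefore (criticalHeight p (levelIndex p s + 1)) (criticalHeight p (levelIndex p s)) r :=
    hitsBefore_snoc_iff (by rw [criticalHeight_add_one, criticalHeight_levelIndex]; omega)
      (by rw [criticalHeight_levelIndex]; omega)
  rw [drad_eq_ncard, ncard_walkSet_succ_inter hs, drad_eq_ncard]
  simp only [isRadicalWalk_iff, levelIndex_sub_one hp h, preimage_ofPred_eq, hsnoc]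

theorem drad_succ_of_emod_eq_sub_one (hp : 1 < p) (hs : 0 ≤ s) (h : (s + 1) % p = p - 1) :
    Drad p (m + 1) s = Drad p m (s - 1) + Dtot m (s + 1) := by
  have hall : WalkSet m (s + 1) ⊆ {r | HitsBefore (criticalHeight p (levelIndex p s + 1))
      (criticalHeight p (levelIndex p s)) r} := fun r hr =>
    hitsBefore_of_last_eq
      (by rw [hr.2.2.2, criticalHeight_add_one, criticalHeight_levelIndex, h]; ring)
      (by rw [criticalHeight_add_one]; omega)
  rw [drad_succ_of_emod_ne_zero (by omega) hs (by omega), inter_eq_left.2 hall, Dtot,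
    Nat.card_coe_set_eq]

theorem drad_succ_of_emod_add_one_lt (hp : 0 < p) (hs : 0 ≤ s) (h0 : (s + 1) % p ≠ 0)
    (h1 : (s + 1) % p + 1 < p) :
    Drad p (m + 1) s = Drad p m (s - 1) + Drad p m (s + 1) := by
  rw [drad_succ_of_emod_ne_zero hp hs h0, drad_eq_ncard p m (s + 1)]
  simp only [isRadicalWalk_iff, levelIndex_add_one hp h1]

end Drad

/-- The radical walk counts `Ḋ_n^{(s)}` satisfy `Ḋ_1^{(1)} = 0` and the recursion:
`Ḋ_n^{(s)} = 0` if `R_s = 0`; `Ḋ_n^{(s)} = Ḋ_{n-1}^{(s-1)} + D_{n-1}^{(s+1)}` if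
`R_s = p−1`; and `Ḋ_n^{(s)} = Ḋ_{n-1}^{(s-1)} + Ḋ_{n-1}^{(s+1)}` if `1 ≤ R_s ≤ p−2`
(the convention `Ḋ_{n-1}^{(-1)} = 0` holds automatically since walks are nonnegative). -/
theorem stmt14 (p : ℕ) (hp : 2 ≤ p) :
    Drad p 1 1 = 0 ∧
    ∀ (n : ℕ) (s : ℤ), 1 ≤ n → 0 ≤ s → s ≤ n → s % 2 = (n : ℤ) % 2 →
      ((s + 1) % (p : ℤ) = 0 → Drad p n s = 0) ∧
      ((s + 1) % (p : ℤ) = (p : ℤ) - 1 →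
        Drad p n s = Drad p (n - 1) (s - 1) + Dtot (n - 1) (s + 1)) ∧
      (1 ≤ (s + 1) % (p : ℤ) → (s + 1) % (p : ℤ) ≤ (p : ℤ) - 2 →
        Drad p n s = Drad p (n - 1) (s - 1) + Drad p (n - 1) (s + 1)) := by
  refine ⟨drad_eq_zero_of_le (by omega) le_rfl, fun n s hn hs _ _ => ?_⟩
  obtain ⟨m, rfl⟩ : ∃ m, n = m + 1 := ⟨n - 1, by omega⟩
  exact ⟨drad_eq_zero_of_emod_eq_zero, drad_succ_of_emod_eq_sub_one hp hs,
    fun h1 h2 => drad_succ_of_emod_add_one_lt (by omega) hs (by omega) (by omega)⟩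
end

section
/- Let p ≥ 2 be an integer and define Δ_k = kp − 1, and for s ≥ 0 write s = Δ_{k_s} + R_s with 0 ≤ R_s ≤ p−1. For walks of ±1 steps of length n from 0 staying nonnegative and ending at s, let Ḋ_n^{(s)} count those that, followed backward, reach height Δ_{k_s+1} before height Δ_{k_s}, and D_n^{(s)} count all of them. Then Ḋ_n^{(s)} = 0 if and only if either R_s = 0, or (n−s)/2 ∈ {0, 1, ..., p − 1 − R_s}. -/
lemma abs_sub_le_of_abs_step_le {n : ℕ} {r : Fin (n + 1) → ℤ}
    (hstep : ∀ i : Fin n, |r i.succ - r i.castSucc| ≤ 1) {i j : Fin (n + 1)} (hij : i ≤ j) :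
    |r j - r i| ≤ (j : ℤ) - i := by
  induction j using Fin.induction with
  | zero => simp [Fin.le_zero_iff.mp hij]
  | succ j ih =>
    rcases hij.eq_or_lt with rfl | hlt
    · simp
    · have hi : i ≤ j.castSucc := Fin.le_castSucc_iff.mpr hlt
      calc |r j.succ - r i| ≤ |r j.succ - r j.castSucc| + |r j.castSucc - r i| :=
            abs_sub_le _ _ _
        _ ≤ 1 + ((j : ℤ) - i) := add_le_add (hstep j) (ih hi)
        _ = (j.succ : ℤ) - i := by push_cast [Fin.val_succ]; ring

namespace WalkSet

variable {n : ℕ} {s : ℤ} {r : Fin (n + 1) → ℤ}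

lemma abs_step_le (hr : r ∈ WalkSet n s) (i : Fin n) : |r i.succ - r i.castSucc| ≤ 1 := by
  rcases hr.2.2.1 i with h | h <;> simp [h]

lemma le_val (hr : r ∈ WalkSet n s) (i : Fin (n + 1)) : r i ≤ i := by
  have := abs_sub_le_of_abs_step_le (abs_step_le hr) (Fin.zero_le i)
  rw [hr.1] at this
  simp only [sub_zero, Fin.val_zero, Nat.cast_zero] at this
  exact (le_abs_self _).trans this

lemma sub_le (hr : r ∈ WalkSet n s) (i : Fin (n + 1)) : r i - s ≤ n - i := by
  have := abs_sub_le_of_abs_step_le (abs_step_le hr) (Fin.le_last i)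
  rw [hr.2.2.2, Fin.val_last, abs_sub_comm] at this
  exact (le_abs_self _).trans this

lemma two_mul_le (hr : r ∈ WalkSet n s) (i : Fin (n + 1)) : 2 * r i ≤ n + s := by
  linarith [le_val hr i, sub_le hr i]

lemma finite (n : ℕ) (s : ℤ) : (WalkSet n s).Finite := by
  refine (Set.Finite.pi (t := fun _ : Fin (n + 1) => Set.Icc (0 : ℤ) n)
    fun _ => Set.finite_Icc _ _).subset fun r hr i _ => ⟨hr.2.1 i, ?_⟩
  have := le_val hr i
  have := i.is_le
  omega

end WalkSet

def peakWalk (n : ℕ) (s h : ℤ) (i : Fin (n + 1)) : ℤ :=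
  if (i : ℤ) ≤ h then i
  else if (i : ℤ) ≤ 2 * h - s then 2 * h - i
  else s + ((i : ℤ) - (2 * h - s)) % 2

lemma peakWalk_mem {n : ℕ} {s h : ℤ} (hs : 0 ≤ s) (hsh : s ≤ h) (hn : 2 * h - s ≤ n)
    (hpar : s % 2 = (n : ℤ) % 2) : peakWalk n s h ∈ WalkSet n s := by
  refine ⟨?_, fun i => ?_, fun i => ?_, ?_⟩ <;> unfold peakWalk
  · simp only [Fin.val_zero, Nat.cast_zero]
    split_ifs <;> omega
  · split_ifs <;> omega
  · simp only [Fin.val_succ, Fin.val_castSucc]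
    have := i.is_lt
    push_cast
    split_ifs <;> omega
  · simp only [Fin.val_last]
    split_ifs <;> omega

lemma peakWalk_of_le {n : ℕ} {s h : ℤ} (hsh : s ≤ h) {j : Fin (n + 1)} (hj : h ≤ j) :
    s ≤ peakWalk n s h j := by
  unfold peakWalk
  split_ifs <;> omega

lemma exists_walk_peak {n : ℕ} {s h : ℤ} (hs : 0 ≤ s) (hsh : s ≤ h) (hn : 2 * h - s ≤ n)
    (hpar : s % 2 = (n : ℤ) % 2) :
    ∃ r ∈ WalkSet n s, ∃ i : Fin (n + 1), r i = h ∧ ∀ j, i ≤ j → s ≤ r j := by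
  refine ⟨peakWalk n s h, peakWalk_mem hs hsh hn hpar, ⟨h.toNat, by omega⟩, ?_, fun j hj => ?_⟩
  · simp only [peakWalk]
    split_ifs <;> omega
  · rw [Fin.le_def] at hj
    exact peakWalk_of_le hsh (by simp only at hj; omega)

lemma Drad_eq_zero_iff (p n : ℕ) (s : ℤ) :
    Drad p n s = 0 ↔ ∀ r ∈ WalkSet n s, ¬IsRadicalWalk p n s r := by
  have : Finite {r : Fin (n + 1) → ℤ // r ∈ WalkSet n s ∧ IsRadicalWalk p n s r} :=
    ((WalkSet.finite n s).subset fun _ hr => hr.1).to_subtype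
  simp [Drad, Nat.card_eq_zero, isEmpty_subtype, not_infinite_iff_finite.mpr this]

lemma delta_succ_eq (p : ℕ) (s : ℤ) : ((s + 1) / (p : ℤ) + 1) * p - 1 = s - (s + 1) % p + p := by
  linear_combination Int.ediv_mul_add_emod (s + 1) p

lemma delta_eq (p : ℕ) (s : ℤ) : (s + 1) / (p : ℤ) * p - 1 = s - (s + 1) % p := by
  linear_combination Int.ediv_mul_add_emod (s + 1) p

theorem stmt15_general (p n : ℕ) (hp : 2 ≤ p) (s : ℤ) (h0 : 0 ≤ s)
    (hpar : s % 2 = (n : ℤ) % 2) :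
    Drad p n s = 0 ↔
      ((s + 1) % (p : ℤ) = 0 ∨ ((n : ℤ) - s) / 2 ≤ (p : ℤ) - 1 - (s + 1) % (p : ℤ)) := by
  have hR : 0 ≤ (s + 1) % (p : ℤ) ∧ (s + 1) % (p : ℤ) < p :=
    ⟨Int.emod_nonneg _ (by omega), Int.emod_lt_of_pos _ (by omega)⟩
  simp only [Drad_eq_zero_iff, IsRadicalWalk, delta_succ_eq, delta_eq]
  constructor
  · intro hnone
    by_contra! hbig
    obtain ⟨r, hr, i, hri, hafter⟩ :=
      exists_walk_peak (h := s - (s + 1) % p + p) h0 (by omega) (by omega) hpar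
    exact hnone r hr ⟨i, hri, fun j hj hrj => by
      have := hafter j hj
      omega⟩
  · rintro hsmall r hr ⟨i, hri, hafter⟩
    rcases hsmall with hR0 | hlow
    · exact hafter (Fin.last n) (Fin.le_last i) (by rw [hr.2.2.2, hR0, sub_zero])
    · have := WalkSet.two_mul_le hr i
      omega

/-- `Ḋ_n^{(s)} = 0` if and only if either `R_s = (s+1) % p = 0`, or
`(n−s)/2 ∈ {0, 1, …, p − 1 − R_s}`. -/
theorem stmt15 (p n : ℕ) (hp : 2 ≤ p) (s : ℤ) (h0 : 0 ≤ s) (hsn : s ≤ n)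
    (hpar : s % 2 = (n : ℤ) % 2) :
    Drad p n s = 0 ↔
      ((s + 1) % (p : ℤ) = 0 ∨ ((n : ℤ) - s) / 2 ≤ (p : ℤ) - 1 - (s + 1) % (p : ℤ)) :=
  stmt15_general p n hp s h0 hpar
end

section
/- Among all walks over a multiindex ς with final height (defect) s, there is a unique maximal one ρ_max (pointwise greatest heights). If any walk over ς with defect s has a radical tail (its highest extension hits Δ_{k_s+1} before its lowest extension hits Δ_{k_s}, going backward), then ρ_max has a radical tail. Consequently, the count Ḋ_ς^{(s)} of walks over ς with defect s and radical tail is nonzero if and only if the count Ḋ_{n_ς}^{(s)} of walks over (1,...,1) (n_ς ones) with defect s and radical tail is nonzero, where n_ς is the sum of the entries of ς. -/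
/-- `r = (r_1, …, r_d)` is a walk over `ς = (s_1, …, s_d)`: with `r_0 = 0` prepended,
consecutive heights satisfy `r_{i+1} ∈ E_{(r_i, s_{i+1})}`. -/
def IsWalk (ς r : List ℕ) : Prop :=
  r.length = ς.length ∧
  ∀ i < ς.length, (0 :: r).getD (i + 1) 0 ∈ Epair ((0 :: r).getD i 0) (ς.getD i 0)

/-- `h_{max,j}(ρ) = (r_j + r_{j+1} + s_{j+1})/2` for `j < d`, and `= r_d` for `j = d`:
the maximal height of the highest fine extension `ρ↑` on the `(j+1)`-st segment. -/
def hmaxHeight (ς r : List ℕ) (j : ℕ) : ℕ :=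
  if j < ς.length then ((0 :: r).getD j 0 + (0 :: r).getD (j + 1) 0 + ς.getD j 0) / 2
  else r.getLastD 0

/-- `h_{min,j}(ρ) = (r_j + r_{j+1} − s_{j+1})/2` for `j < d`, and `= r_d` for `j = d`:
the minimal height of the lowest fine extension `ρ↓` on the `(j+1)`-st segment. -/
def hminHeight (ς r : List ℕ) (j : ℕ) : ℕ :=
  if j < ς.length then ((0 :: r).getD j 0 + (0 :: r).getD (j + 1) 0 - ς.getD j 0) / 2
  else r.getLastD 0

/-- With `Δ_k = kp − 1` and `k = k_s = (s+1)/p` for `s` the defect of the walk: followed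
backward, the highest extension `ρ↑` hits `Δ_{k_s+1}` before the lowest extension `ρ↓`
hits `Δ_{k_s}` — i.e. there is a segment index `j` at which `ρ↑` reaches `Δ_{k_s+1}`,
while `ρ↓` stays strictly above `Δ_{k_s}` on all segments from `j` onward. -/
def HasRadicalTail (p : ℕ) (ς r : List ℕ) : Prop :=
  ∃ j ≤ ς.length,
    ((((r.getLastD 0 + 1) / p : ℕ) + 1) * p : ℤ) - 1 ≤ (hmaxHeight ς r j : ℤ) ∧
    ∀ j', j ≤ j' → j' ≤ ς.length →
      ((((r.getLastD 0 + 1) / p : ℕ) * p : ℤ)) - 1 < (hminHeight ς r j' : ℤ)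

/-- `ρ` is the (pointwise) maximal walk over `ς` with defect `s`. -/
def IsMaxWalk (ς : List ℕ) (s : ℕ) (ρ : List ℕ) : Prop :=
  IsWalk ς ρ ∧ ρ.getLastD 0 = s ∧
  ∀ r, IsWalk ς r → r.getLastD 0 = s →
    ∀ j ≤ ς.length, (0 :: r).getD j 0 ≤ (0 :: ρ).getD j 0

/-- `Ḋ_ς^{(s)}`: the number of walks over `ς` with defect `s` and radical tail. -/
noncomputable def DradM (p : ℕ) (ς : List ℕ) (s : ℕ) : ℕ :=
  Nat.card {r : List ℕ // IsWalk ς r ∧ r.getLastD 0 = s ∧ HasRadicalTail p ς r}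

/-!
With `σ_j = s_1 + ⋯ + s_j` and `n = n_ς`, a walk with defect `s` satisfies `r_j ≤ σ_j` (it climbs
by at most `s_i` per step) and `r_j ≤ s + n − σ_j` (it must still come down to `s`), and
`r_j ≡ σ_j (mod 2)`. The tent `ρ_j = min(σ_j, s + n − σ_j)` is a walk as soon as any walk of
defect `s` exists, so it is the maximal walk. The heights of the extensions `ρ↑`, `ρ↓` grow with
the walk, hence a radical tail passes from any walk to the tent.

For the tent the radical tail is decided by `s`, `n`, `p` alone: `ρ↑` peaks at `(s + n)/2`, which
must reach `Δ_{k_s+1}`, while `ρ↓` never drops more than `max ς < p` below the tent, so it stays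
above `Δ_{k_s}` as long as `s ≠ Δ_{k_s}`. Any walk with a radical tail satisfies the same two
conditions, and `(1, …, 1)` with `n` entries has the same sum as `ς`.
-/

theorem List.getD_cons_length {α : Type*} (a d : α) (r : List α) :
    (a :: r).getD r.length d = r.getLastD a := by
  rw [← List.getLast_eq_getLastD (List.cons_ne_nil a r), List.getLast_eq_getElem,
    List.getD_eq_getElem _ _ (by simp)]
  simp

def partialSum (ς : List ℕ) (j : ℕ) : ℕ := (ς.take j).sum

@[simp] theorem partialSum_zero (ς : List ℕ) : partialSum ς 0 = 0 := rfl

theorem partialSum_succ {ς : List ℕ} {j : ℕ} (h : j < ς.length) :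
    partialSum ς (j + 1) = partialSum ς j + ς.getD j 0 := by
  rw [partialSum, partialSum, List.sum_take_succ _ _ h, List.getD_eq_getElem _ _ h]

theorem partialSum_length (ς : List ℕ) : partialSum ς ς.length = ς.sum := by
  rw [partialSum, List.take_length]

theorem partialSum_le_sum (ς : List ℕ) (j : ℕ) : partialSum ς j ≤ ς.sum := by
  unfold partialSum
  conv_rhs => rw [← List.take_append_drop j ς, List.sum_append]
  exact Nat.le_add_right _ _

theorem partialSum_mono (ς : List ℕ) : Monotone (partialSum ς) := fun i j h =>
  calc partialSum ς i = partialSum (ς.take j) i := by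
        rw [partialSum, partialSum, List.take_take, min_eq_left h]
    _ ≤ partialSum ς j := partialSum_le_sum _ _

theorem Nat.exists_lt_not_and_succ {P : ℕ → Prop} {d : ℕ} (h0 : ¬P 0) (hd : P d) :
    ∃ j < d, ¬P j ∧ P (j + 1) := by
  classical
  have hex : ∃ m, P m := ⟨d, hd⟩
  obtain ⟨j, hj⟩ := Nat.exists_eq_succ_of_ne_zero fun h => h0 (h ▸ Nat.find_spec hex)
  refine ⟨j, ?_, Nat.find_min hex (by omega), ?_⟩
  · have := Nat.find_min' hex hd
    omega
  · rw [← Nat.succ_eq_add_one, ← hj]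
    exact Nat.find_spec hex

section Walk

variable {ς r : List ℕ}

theorem IsWalk.step (hw : IsWalk ς r) {i : ℕ} (h : i < ς.length) :
    ς.getD i 0 ≤ (0 :: r).getD i 0 + (0 :: r).getD (i + 1) 0 ∧
    (0 :: r).getD i 0 ≤ (0 :: r).getD (i + 1) 0 + ς.getD i 0 ∧
    (0 :: r).getD (i + 1) 0 ≤ (0 :: r).getD i 0 + ς.getD i 0 ∧
    (0 :: r).getD (i + 1) 0 % 2 = ((0 :: r).getD i 0 + ς.getD i 0) % 2 := by
  obtain ⟨h1, h2, h3⟩ := hw.2 i h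
  omega

theorem IsWalk.getD_length (hw : IsWalk ς r) : (0 :: r).getD ς.length 0 = r.getLastD 0 := by
  rw [← hw.1, List.getD_cons_length]

theorem IsWalk.getD_le_partialSum (hw : IsWalk ς r) {j : ℕ} (hj : j ≤ ς.length) :
    (0 :: r).getD j 0 ≤ partialSum ς j := by
  induction j with
  | zero => simp
  | succ i ih =>
    have := hw.step hj
    have := ih (by omega)
    have := partialSum_succ hj
    omega

theorem IsWalk.getD_mod_two (hw : IsWalk ς r) {j : ℕ} (hj : j ≤ ς.length) :
    (0 :: r).getD j 0 % 2 = partialSum ς j % 2 := by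
  induction j with
  | zero => simp
  | succ i ih =>
    have := hw.step hj
    have := ih (by omega)
    have := partialSum_succ hj
    omega

theorem IsWalk.getD_add_partialSum_le (hw : IsWalk ς r) {j : ℕ} (hj : j ≤ ς.length) :
    (0 :: r).getD j 0 + partialSum ς j ≤ r.getLastD 0 + ς.sum := by
  induction hj using Nat.decreasingInduction with
  | self => rw [hw.getD_length, partialSum_length]
  | of_succ i hi ih =>
    have := hw.step hi
    have := partialSum_succ hi
    omega

theorem IsWalk.getLastD_le_sum (hw : IsWalk ς r) : r.getLastD 0 ≤ ς.sum := by
  simpa only [hw.getD_length, partialSum_length] using hw.getD_le_partialSum le_rfl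

theorem IsWalk.getLastD_mod_two (hw : IsWalk ς r) : r.getLastD 0 % 2 = ς.sum % 2 := by
  simpa only [hw.getD_length, partialSum_length] using hw.getD_mod_two le_rfl

theorem IsWalk.two_mul_getD_le (hw : IsWalk ς r) {j : ℕ} (hj : j < ς.length) :
    2 * ς.getD j 0 ≤ r.getLastD 0 + ς.sum := by
  have := hw.step hj
  have := hw.getD_le_partialSum hj.le
  have := hw.getD_add_partialSum_le (j := j + 1) hj
  have := partialSum_succ hj
  omega

theorem IsWalk.two_mul_hmaxHeight_le (hw : IsWalk ς r) (j : ℕ) :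
    2 * hmaxHeight ς r j ≤ r.getLastD 0 + ς.sum := by
  unfold hmaxHeight
  split_ifs with hj
  · have := hw.getD_le_partialSum hj.le
    have := hw.getD_add_partialSum_le (j := j + 1) hj
    have := partialSum_succ hj
    omega
  · have := hw.getLastD_le_sum
    omega

end Walk

def tentWalk (ς : List ℕ) (s : ℕ) : List ℕ :=
  (List.range ς.length).map fun i => min (partialSum ς (i + 1)) (s + ς.sum - partialSum ς (i + 1))

theorem length_tentWalk (ς : List ℕ) (s : ℕ) : (tentWalk ς s).length = ς.length := by
  simp [tentWalk]

theorem getD_tentWalk (ς : List ℕ) (s : ℕ) {j : ℕ} (hj : j ≤ ς.length) :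
    (0 :: tentWalk ς s).getD j 0 = min (partialSum ς j) (s + ς.sum - partialSum ς j) := by
  cases j with
  | zero => simp
  | succ i =>
    simp [tentWalk, List.getD_eq_getElem?_getD, List.getElem?_range (by omega : i < ς.length)]

theorem getLastD_tentWalk (ς : List ℕ) {s : ℕ} (hs : s ≤ ς.sum) :
    (tentWalk ς s).getLastD 0 = s := by
  have := getD_tentWalk ς s le_rfl
  rw [← length_tentWalk ς s, List.getD_cons_length, length_tentWalk, partialSum_length] at this
  omega

theorem isWalk_tentWalk {ς : List ℕ} {s : ℕ} (hpar : s % 2 = ς.sum % 2)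
    (hstep : ∀ j < ς.length, 2 * ς.getD j 0 ≤ s + ς.sum) : IsWalk ς (tentWalk ς s) := by
  refine ⟨length_tentWalk ς s, fun i hi => ?_⟩
  rw [getD_tentWalk ς s hi.le, getD_tentWalk ς s (j := i + 1) hi]
  have := partialSum_succ hi
  have := partialSum_le_sum ς (i + 1)
  have := hstep i hi
  simp only [Epair, Set.mem_ofPred_eq]
  omega

theorem IsWalk.getD_le_tentWalk {ς r : List ℕ} (hw : IsWalk ς r) {j : ℕ} (hj : j ≤ ς.length) :
    (0 :: r).getD j 0 ≤ (0 :: tentWalk ς (r.getLastD 0)).getD j 0 := by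
  rw [getD_tentWalk _ _ hj]
  have := hw.getD_le_partialSum hj
  have := hw.getD_add_partialSum_le hj
  omega

theorem exists_isWalk_iff {ς : List ℕ} {s : ℕ} :
    (∃ r, IsWalk ς r ∧ r.getLastD 0 = s) ↔
      s ≤ ς.sum ∧ s % 2 = ς.sum % 2 ∧ ∀ j < ς.length, 2 * ς.getD j 0 ≤ s + ς.sum := by
  constructor
  · rintro ⟨r, hw, rfl⟩
    exact ⟨hw.getLastD_le_sum, hw.getLastD_mod_two, fun j => hw.two_mul_getD_le⟩
  · rintro ⟨hs, hpar, hstep⟩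
    exact ⟨tentWalk ς s, isWalk_tentWalk hpar hstep, getLastD_tentWalk ς hs⟩

theorem IsWalk.isMaxWalk_tentWalk {ς r : List ℕ} (hw : IsWalk ς r) :
    IsMaxWalk ς (r.getLastD 0) (tentWalk ς (r.getLastD 0)) := by
  refine ⟨isWalk_tentWalk hw.getLastD_mod_two fun j => hw.two_mul_getD_le,
    getLastD_tentWalk ς hw.getLastD_le_sum, ?_⟩
  rintro r' hw' hl' j hj
  exact hl' ▸ hw'.getD_le_tentWalk hj

theorem IsMaxWalk.eq {ς ρ ρ' : List ℕ} {s : ℕ} (h : IsMaxWalk ς s ρ) (h' : IsMaxWalk ς s ρ') :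
    ρ = ρ' := by
  refine List.ext_getElem (h.1.1.trans h'.1.1.symm) fun i hi hi' => ?_
  have hiς : i + 1 ≤ ς.length := h.1.1 ▸ hi
  have hle := h.2.2 ρ' h'.1 h'.2.1 (i + 1) hiς
  have hge := h'.2.2 ρ h.1 h.2.1 (i + 1) hiς
  simp only [List.getD_cons_succ, List.getD_eq_getElem _ _ hi, List.getD_eq_getElem _ _ hi']
    at hle hge
  omega

theorem IsWalk.existsUnique_isMaxWalk {ς r : List ℕ} (hw : IsWalk ς r) :
    ∃! ρ, IsMaxWalk ς (r.getLastD 0) ρ :=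
  ⟨_, hw.isMaxWalk_tentWalk, fun _ hρ => hρ.eq hw.isMaxWalk_tentWalk⟩

section RadicalTail

variable {p : ℕ} {ς r ρ : List ℕ}

theorem hmaxHeight_mono (hlast : r.getLastD 0 = ρ.getLastD 0)
    (hle : ∀ j ≤ ς.length, (0 :: r).getD j 0 ≤ (0 :: ρ).getD j 0) (j : ℕ) :
    hmaxHeight ς r j ≤ hmaxHeight ς ρ j := by
  unfold hmaxHeight
  split_ifs with hj
  · have := hle j hj.le
    have := hle (j + 1) hj
    omega
  · exact hlast.le

theorem hminHeight_mono (hlast : r.getLastD 0 = ρ.getLastD 0)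
    (hle : ∀ j ≤ ς.length, (0 :: r).getD j 0 ≤ (0 :: ρ).getD j 0) (j : ℕ) :
    hminHeight ς r j ≤ hminHeight ς ρ j := by
  unfold hminHeight
  split_ifs with hj
  · have := hle j hj.le
    have := hle (j + 1) hj
    omega
  · exact hlast.le

theorem HasRadicalTail.mono (ht : HasRadicalTail p ς r) (hlast : r.getLastD 0 = ρ.getLastD 0)
    (hle : ∀ j ≤ ς.length, (0 :: r).getD j 0 ≤ (0 :: ρ).getD j 0) : HasRadicalTail p ς ρ := by
  obtain ⟨j, hj, hmax, hmin⟩ := ht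
  rw [hlast] at hmax hmin
  refine ⟨j, hj, hmax.trans (by exact_mod_cast hmaxHeight_mono hlast hle j), fun j' h h' => ?_⟩
  exact (hmin j' h h').trans_le (by exact_mod_cast hminHeight_mono hlast hle j')

theorem IsMaxWalk.hasRadicalTail {s : ℕ} (hρ : IsMaxWalk ς s ρ) (hw : IsWalk ς r)
    (hl : r.getLastD 0 = s) (ht : HasRadicalTail p ς r) : HasRadicalTail p ς ρ :=
  ht.mono (hl.trans hρ.2.1.symm) (hρ.2.2 r hw hl)

theorem hasRadicalTail_iff : HasRadicalTail p ς r ↔ ∃ j ≤ ς.length,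
      ((r.getLastD 0 + 1) / p + 1) * p ≤ hmaxHeight ς r j + 1 ∧
      ∀ j', j ≤ j' → j' ≤ ς.length → (r.getLastD 0 + 1) / p * p ≤ hminHeight ς r j' := by
  simp only [HasRadicalTail, Int.sub_one_lt_iff, sub_le_iff_le_add]
  norm_cast

/-- With `k = k_s`: `s ≠ Δ_k`, and the peak `(s + n)/2` of the maximal walk reaches `Δ_{k+1}`. -/
def RadicalTailCondition (p n s : ℕ) : Prop :=
  (s + 1) / p * p ≤ s ∧ 2 * (((s + 1) / p + 1) * p) ≤ s + n + 2

theorem HasRadicalTail.radicalTailCondition (hw : IsWalk ς r) (ht : HasRadicalTail p ς r) :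
    RadicalTailCondition p ς.sum (r.getLastD 0) := by
  obtain ⟨j, hj, hmax, hmin⟩ := hasRadicalTail_iff.1 ht
  have hlast := hmin ς.length hj le_rfl
  simp only [hminHeight, lt_irrefl, if_false] at hlast
  have := hw.two_mul_hmaxHeight_le j
  exact ⟨hlast, by omega⟩

theorem hasRadicalTail_tentWalk (hp : 0 < p) (hςp : ∀ x ∈ ς, x < p) {s : ℕ} (hs : s ≤ ς.sum)
    (hc : RadicalTailCondition p ς.sum s) : HasRadicalTail p ς (tentWalk ς s) := by
  obtain ⟨hc1, hc2⟩ := hc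
  have hk := Nat.lt_div_mul_add (a := s + 1) hp
  rw [hasRadicalTail_iff, getLastD_tentWalk ς hs]
  generalize (s + 1) / p = k at *
  have hkp : (k + 1) * p = k * p + p := by ring
  -- `j₀` is the segment on which the tent turns from climbing to descending
  obtain ⟨j₀, hj₀, hbelow, habove⟩ := Nat.exists_lt_not_and_succ
    (P := fun j => s + ς.sum ≤ 2 * partialSum ς j) (d := ς.length) (by simp; omega)
    (by simp only [partialSum_length]; omega)
  have hj₀succ := partialSum_succ hj₀
  refine ⟨j₀, hj₀.le, ?_, fun j hj hjd => ?_⟩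
  · simp only [hmaxHeight, if_pos hj₀, getD_tentWalk ς s hj₀.le,
      getD_tentWalk ς s (j := j₀ + 1) hj₀]
    have := partialSum_le_sum ς (j₀ + 1)
    omega
  · rcases hjd.lt_or_eq with hjlt | rfl
    · have hsj : ς.getD j 0 < p := by
        rw [List.getD_eq_getElem _ _ hjlt]
        exact hςp _ (List.getElem_mem _)
      have := partialSum_succ hjlt
      have := partialSum_le_sum ς (j + 1)
      have hdesc : j = j₀ ∨ partialSum ς (j₀ + 1) ≤ partialSum ς j :=
        hj.eq_or_lt.imp Eq.symm fun h => partialSum_mono ς h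
      simp only [hminHeight, if_pos hjlt, getD_tentWalk ς s hjlt.le,
        getD_tentWalk ς s (j := j + 1) hjlt]
      rcases hdesc with rfl | hdesc <;> omega
    · simpa only [hminHeight, lt_irrefl, if_false, getLastD_tentWalk ς hs] using hc1

theorem exists_hasRadicalTail_iff (hp : 0 < p) (hςp : ∀ x ∈ ς, x < p) {s : ℕ}
    (hex : ∃ r, IsWalk ς r ∧ r.getLastD 0 = s) :
    (∃ r, IsWalk ς r ∧ r.getLastD 0 = s ∧ HasRadicalTail p ς r) ↔
      RadicalTailCondition p ς.sum s := by
  obtain ⟨hs, hpar, hstep⟩ := exists_isWalk_iff.1 hex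
  constructor
  · rintro ⟨r, hw, rfl, ht⟩
    exact ht.radicalTailCondition hw
  · exact fun hc => ⟨tentWalk ς s, isWalk_tentWalk hpar hstep, getLastD_tentWalk ς hs,
      hasRadicalTail_tentWalk hp hςp hs hc⟩

end RadicalTail

theorem finite_setOf_isWalk (ς : List ℕ) : {r | IsWalk ς r}.Finite := by
  refine ((List.finite_length_eq (Fin (ς.sum + 1)) ς.length).image (List.map Fin.val)).subset ?_
  intro r hw
  have hbound : ∀ x ∈ r, x < ς.sum + 1 := by
    intro x hx
    obtain ⟨i, hi, rfl⟩ := List.getElem_of_mem hx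
    have := hw.getD_le_partialSum (j := i + 1) (hw.1 ▸ hi)
    have := partialSum_le_sum ς (i + 1)
    rw [List.getD_cons_succ, List.getD_eq_getElem _ _ hi] at *
    omega
  refine ⟨r.pmap Fin.mk hbound, by simpa using hw.1, ?_⟩
  simp [List.map_pmap]

theorem DradM_ne_zero_iff {p : ℕ} {ς : List ℕ} {s : ℕ} :
    DradM p ς s ≠ 0 ↔ ∃ r, IsWalk ς r ∧ r.getLastD 0 = s ∧ HasRadicalTail p ς r := by
  rw [DradM, Nat.card_ne_zero, nonempty_subtype]
  exact and_iff_left ((finite_setOf_isWalk ς).subset fun _ h => h.1).to_subtype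

theorem exists_isWalk_replicate_one {ς : List ℕ} {s : ℕ}
    (hex : ∃ r, IsWalk ς r ∧ r.getLastD 0 = s) :
    ∃ r, IsWalk (List.replicate ς.sum 1) r ∧ r.getLastD 0 = s := by
  obtain ⟨hs, hpar, -⟩ := exists_isWalk_iff.1 hex
  refine exists_isWalk_iff.2 ⟨by simpa using hs, by simpa using hpar, fun j hj => ?_⟩
  rw [List.length_replicate] at hj
  simp only [List.getD_eq_getElem?_getD, List.getElem?_replicate, hj, if_true, Option.getD_some,
    List.sum_replicate, smul_eq_mul, mul_one]
  omega

/-- Among walks over `ς` with defect `s` there is a unique maximal one; if any walk with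
defect `s` has a radical tail then the maximal one does; and consequently
`Ḋ_ς^{(s)} ≠ 0` iff `Ḋ_{(1,…,1)}^{(s)} ≠ 0` (with `n_ς = s_1 + ⋯ + s_d` ones). -/
theorem stmt16 (p : ℕ) (hp : 2 ≤ p) (ς : List ℕ) (hςp : ∀ x ∈ ς, x < p)
    (s : ℕ) (hex : ∃ r, IsWalk ς r ∧ r.getLastD 0 = s) :
    (∃! ρ, IsMaxWalk ς s ρ) ∧
    (∀ ρ, IsMaxWalk ς s ρ →
      (∃ r, IsWalk ς r ∧ r.getLastD 0 = s ∧ HasRadicalTail p ς r) →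
      HasRadicalTail p ς ρ) ∧
    (DradM p ς s ≠ 0 ↔ DradM p (List.replicate ς.sum 1) s ≠ 0) := by
  have hp₀ : 0 < p := by omega
  have hones : ∀ x ∈ List.replicate ς.sum 1, x < p := fun x hx => by
    rw [List.eq_of_mem_replicate hx]
    omega
  refine ⟨?_, fun ρ hρ ⟨r, hw, hl, ht⟩ => hρ.hasRadicalTail hw hl ht, ?_⟩
  · obtain ⟨r, hw, rfl⟩ := hex
    exact hw.existsUnique_isMaxWalk
  · rw [DradM_ne_zero_iff, DradM_ne_zero_iff, exists_hasRadicalTail_iff hp₀ hςp hex,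
      exists_hasRadicalTail_iff hp₀ hones (exists_isWalk_replicate_one hex), List.sum_replicate,
      smul_eq_mul, mul_one]
end

section
/- Let p ≥ 2 and consider ±1-step walks from 0 of length n staying nonnegative, ending at height s ∈ E_n. If p ≤ s + 1, then there exists such a walk which, when followed backward, reaches height Δ_{k_s} = k_s·p − 1 (from above, via its lowest extension) before reaching height Δ_{k_s+1} = (k_s+1)·p − 1. -/
def zigzagThenUp (d i : ℕ) : ℤ := if i ≤ d then ((i % 2 : ℕ) : ℤ) else (i : ℤ) - d

section zigzagThenUp

variable {d : ℕ}

lemma zigzagThenUp_zero : zigzagThenUp d 0 = 0 := by simp [zigzagThenUp]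

lemma zigzagThenUp_nonneg (i : ℕ) : 0 ≤ zigzagThenUp d i := by
  unfold zigzagThenUp; split <;> omega

lemma zigzagThenUp_add (hd : Even d) (m : ℕ) : zigzagThenUp d (d + m) = m := by
  rw [Nat.even_iff] at hd
  unfold zigzagThenUp; split <;> omega

lemma zigzagThenUp_succ_sub (hd : Even d) (i : ℕ) :
    zigzagThenUp d (i + 1) - zigzagThenUp d i = 1 ∨
      zigzagThenUp d (i + 1) - zigzagThenUp d i = -1 := by
  rw [Nat.even_iff] at hd
  unfold zigzagThenUp; split <;> split <;> omega

lemma zigzagThenUp_le {m i : ℕ} (hm : 1 ≤ m) (hi : i ≤ d + m) : zigzagThenUp d i ≤ m := by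
  unfold zigzagThenUp; split <;> omega

lemma zigzagThenUp_mem_walkSet (hd : Even d) (m : ℕ) :
    (fun i : Fin (d + m + 1) => zigzagThenUp d i) ∈ WalkSet (d + m) m :=
  ⟨zigzagThenUp_zero, fun i => zigzagThenUp_nonneg i, fun i => zigzagThenUp_succ_sub hd i,
    zigzagThenUp_add hd m⟩

end zigzagThenUp

theorem exists_mem_walkSet_hits_of_le {n : ℕ} {s h : ℤ} (hs : 1 ≤ s) (hsn : s ≤ n)
    (hpar : s % 2 = (n : ℤ) % 2) (h0 : 0 ≤ h) (hhs : h ≤ s) :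
    ∃ r ∈ WalkSet n s, (∃ i, r i = h) ∧ ∀ j, r j ≤ s := by
  lift s to ℕ using by omega
  lift h to ℕ using h0
  obtain ⟨d, rfl⟩ : ∃ d, n = d + s := ⟨n - s, by omega⟩
  have hd : Even d := Nat.even_iff.2 (by omega)
  exact ⟨_, zigzagThenUp_mem_walkSet hd s, ⟨⟨d + h, by omega⟩, zigzagThenUp_add hd h⟩,
    fun j => zigzagThenUp_le (by omega) (by omega)⟩

theorem stmt19_general (p n : ℕ) (hp : 2 ≤ p) (s : ℤ) (hsn : s ≤ n)
    (hpar : s % 2 = (n : ℤ) % 2) (hps : (p : ℤ) ≤ s + 1) :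
    ∃ r ∈ WalkSet n s, ∃ i : Fin (n + 1),
      r i = ((s + 1) / (p : ℤ)) * p - 1 ∧
      ∀ j : Fin (n + 1), i ≤ j → r j ≠ ((s + 1) / (p : ℤ) + 1) * p - 1 := by
  have hp0 : (0 : ℤ) < p := by omega
  set k := (s + 1) / (p : ℤ)
  have hk : 1 ≤ k := (Int.le_ediv_iff_mul_le hp0).2 (by linarith)
  have hΔ_le : k * p - 1 ≤ s := by linarith [Int.ediv_mul_le (s + 1) hp0.ne']
  have hlt_Δ : s < (k + 1) * p - 1 := by linarith [Int.lt_ediv_add_one_mul_self (s + 1) hp0]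
  obtain ⟨r, hr, ⟨i, hi⟩, hbound⟩ :=
    exists_mem_walkSet_hits_of_le (by omega) hsn hpar (by nlinarith) hΔ_le
  exact ⟨r, hr, i, hi, fun j _ => ((hbound j).trans_lt hlt_Δ).ne⟩

/-- For `p ≥ 2`, `s ∈ E_n` and `p ≤ s + 1` (with `Δ_k = kp − 1`, `k_s = (s+1)/p`), there
exists a nonnegative ±1-walk of length `n` from `0` to `s` which, followed backward,
reaches height `Δ_{k_s}` before reaching height `Δ_{k_s+1}`. -/
theorem stmt19 (p n : ℕ) (hp : 2 ≤ p) (s : ℤ) (h0 : 0 ≤ s) (hsn : s ≤ n)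
    (hpar : s % 2 = (n : ℤ) % 2) (hps : (p : ℤ) ≤ s + 1) :
    ∃ r ∈ WalkSet n s, ∃ i : Fin (n + 1),
      r i = ((s + 1) / (p : ℤ)) * p - 1 ∧
      ∀ j : Fin (n + 1), i ≤ j → r j ≠ ((s + 1) / (p : ℤ) + 1) * p - 1 :=
  stmt19_general p n hp s hsn hpar hps
end
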